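/- arXiv:2412.08502 — 4 statements merged into one kernel-verified Lean document; each statement's English description precedes it below -/
import Mathlib

section
/- For a simple symmetric random walk, $\mathbb{P}(\tau > n) = \tfrac{1}{2}\,\mathbb{P}(S_{n-1} \in \{0,1\})$ for all $n \ge 1$. -/
/-!
Encode the first `n` steps by their signs `v : Fin n → Bool`. By independence every sign
pattern has probability `2⁻ⁿ`, and almost surely the walk is the lattice path `walk v`, so both
sides are path counts. `τ > m + 1` forces a first step up followed by `m` steps staying `≥ 0`.
Splitting off the first step, the number of paths of length `m` staying `≥ -h` and the number of
those ending in `[-h, h + 1]` obey the same recursion in `(m, h)` (the latter by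
inclusion–exclusion of two intervals), so they agree; at `h = 0` the latter counts the paths
ending in `{0, 1}`.
-/

open MeasureTheory ProbabilityTheory Finset

/-- First time `n ≥ 1` at which the walk `S` is non-positive (`⊤` if never). -/
noncomputable def hittingTime {Ω : Type*} (S : ℕ → Ω → ℝ) (ω : Ω) : ℕ∞ :=
  sInf {m : ℕ∞ | ∃ n : ℕ, m = n ∧ 1 ≤ n ∧ S n ω ≤ 0}

namespace SimpleRandomWalk

def step (b : Bool) : ℤ := if b then 1 else -1

def walk {m : ℕ} (v : Fin m → Bool) (k : ℕ) : ℤ :=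
  ∑ i : Fin m, if (i : ℕ) < k then step (v i) else 0

@[simp] lemma walk_zero {m : ℕ} (v : Fin m → Bool) : walk v 0 = 0 := by
  simp [walk]

@[simp] lemma walk_of_fin_zero (v : Fin 0 → Bool) (k : ℕ) : walk v k = 0 := by
  simp [walk]

@[simp] lemma walk_cons_succ {m : ℕ} (b : Bool) (v : Fin m → Bool) (k : ℕ) :
    walk (Fin.cons b v : Fin (m + 1) → Bool) (k + 1) = step b + walk v k := by
  simp [walk, Fin.sum_univ_succ]

lemma card_filter_cons {m : ℕ} (p : (Fin (m + 1) → Bool) → Prop) [DecidablePred p] :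
    #{v | p v}
      = #{v : Fin m → Bool | p (Fin.cons false v)} + #{v : Fin m → Bool | p (Fin.cons true v)} := by
  simp only [card_filter]
  rw [← (Fin.consEquiv fun _ => Bool).sum_comp, Fintype.sum_prod_type, Fintype.sum_bool, add_comm]
  rfl

lemma card_filter_mem_Icc_add_card_filter_mem_Icc {α : Type*} [Fintype α] [DecidableEq α]
    (f : α → ℤ) {a b c d : ℤ} (hab : a ≤ b) (hbc : b ≤ c + 1) (hcd : c ≤ d) :
    #{x | f x ∈ Set.Icc a c} + #{x | f x ∈ Set.Icc b d}
      = #{x | f x ∈ Set.Icc a d} + #{x | f x ∈ Set.Icc b c} := by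
  rw [← card_union_add_card_inter, ← filter_or, ← filter_and]
  congr 2 <;> ext x <;> simp only [mem_filter, mem_univ, true_and, Set.mem_Icc] <;> omega

lemma forall_lt_neg_le_walk_cons {m : ℕ} {h : ℤ} (hh : 0 ≤ h) (b : Bool)
    (v : Fin m → Bool) :
    (∀ k < m + 2, -h ≤ walk (Fin.cons b v : Fin (m + 1) → Bool) k)
      ↔ ∀ k < m + 1, -(h + step b) ≤ walk v k := by
  simp only [Nat.forall_lt_succ_left (n := m + 1), walk_zero, walk_cons_succ]
  exact ⟨fun hv k hk => by linarith [hv.2 k hk],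
    fun hv => ⟨by omega, fun k hk => by linarith [hv k hk]⟩⟩

lemma card_forall_neg_le_walk_eq_card_walk_mem_Icc (m : ℕ) {h : ℤ} (hh : -1 ≤ h) :
    #{v : Fin m → Bool | ∀ k < m + 1, -h ≤ walk v k}
      = #{v : Fin m → Bool | walk v m ∈ Set.Icc (-h) (h + 1)} := by
  induction m generalizing h with
  | zero =>
    congr 1
    refine filter_congr fun v _ => ?_
    simp only [walk_of_fin_zero, Set.mem_Icc]
    exact ⟨fun h0 => ⟨h0 0 (by omega), by omega⟩, fun h0 _ _ => h0.1⟩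
  | succ m ih =>
    obtain rfl | hh := hh.eq_or_lt
    · rw [filter_false_of_mem, filter_false_of_mem]
      · intro v _
        simp
      · intro v _ hv
        simpa using hv 0 (by omega)
    calc #{v : Fin (m + 1) → Bool | ∀ k < m + 2, -h ≤ walk v k}
        = #{v : Fin m → Bool | ∀ k < m + 1, -(h - 1) ≤ walk v k}
          + #{v : Fin m → Bool | ∀ k < m + 1, -(h + 1) ≤ walk v k} := by
          rw [card_filter_cons]
          congr 2 <;>
            refine filter_congr fun v _ => (forall_lt_neg_le_walk_cons (by omega) _ v).trans ?_ <;>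
            simp [step, sub_eq_add_neg]
      _ = #{v : Fin m → Bool | walk v m ∈ Set.Icc (-(h + 1)) (h + 1 + 1)}
          + #{v : Fin m → Bool | walk v m ∈ Set.Icc (-(h - 1)) (h - 1 + 1)} := by
          rw [ih (by omega), ih (by omega), add_comm]
      _ = #{v : Fin m → Bool | walk v m ∈ Set.Icc (-(h - 1)) (h + 1 + 1)}
          + #{v : Fin m → Bool | walk v m ∈ Set.Icc (-(h + 1)) (h - 1 + 1)} :=
          (card_filter_mem_Icc_add_card_filter_mem_Icc _
            (by omega) (by omega) (by omega)).symm.trans (add_comm _ _)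
      _ = #{v : Fin (m + 1) → Bool | walk v (m + 1) ∈ Set.Icc (-h) (h + 1)} := by
          rw [card_filter_cons]
          congr 2 <;> refine filter_congr fun v _ => ?_ <;>
            simp [step] <;> omega

lemma card_forall_walk_pos_eq_card_walk_eq_zero_or_one (m : ℕ) :
    #{v : Fin (m + 1) → Bool | ∀ k < m + 1, 0 < walk v (k + 1)}
      = #{v : Fin m → Bool | walk v m = 0 ∨ walk v m = 1} := by
  rw [card_filter_cons, filter_false_of_mem, card_empty, zero_add]
  · convert card_forall_neg_le_walk_eq_card_walk_mem_Icc m (h := 0) (by norm_num) using 2 <;>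
      refine filter_congr fun v _ => ?_ <;> simp only [walk_cons_succ, step, if_true, Set.mem_Icc]
    · exact forall₂_congr fun k _ => by omega
    · omega
  · intro v _ hv
    simpa [step] using hv 0 (by omega)

section Probability

variable {Ω : Type*} {X : ℕ → Ω → ℝ}

noncomputable def signs (X : ℕ → Ω → ℝ) (n : ℕ) (ω : Ω) : Fin n → Bool :=
  fun i => X i ω = 1

lemma signs_preimage_singleton (n : ℕ) (v : Fin n → Bool) :
    signs X n ⁻¹' {v} = ⋂ i : Fin n, X i ⁻¹' (if v i then {1} else {1}ᶜ) := by
  ext ω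
  simp only [Set.mem_preimage, Set.mem_singleton_iff, Set.mem_iInter, funext_iff, signs]
  refine forall_congr' fun i => ?_
  cases v i <;> simp

lemma sum_range_eq_walk_signs {ω : Ω} (hω : ∀ i, X i ω = 1 ∨ X i ω = -1) {n k : ℕ}
    (hk : k ≤ n) :
    ∑ i ∈ range k, X i ω = walk (signs X n ω) k := by
  have hX (i : ℕ) : X i ω = step (X i ω = 1) := by
    rcases hω i with h | h <;> norm_num [h, step]
  simp only [walk, signs]
  rw [Fin.sum_univ_eq_sum_range (fun i => if i < k then step (X i ω = 1) else 0) n,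
    ← sum_filter, Int.cast_sum]
  exact sum_congr (by ext i; simp; omega) fun i _ => hX i

lemma natCast_lt_hittingTime_iff {S : ℕ → Ω → ℝ} {ω : Ω} {n : ℕ} :
    (n : ℕ∞) < hittingTime S ω ↔ ∀ k < n, 0 < S (k + 1) ω := by
  rw [hittingTime, ← ENat.add_one_le_iff (ENat.natCast_ne_top n), le_sInf_iff]
  constructor
  · intro h k hk
    by_contra! hS
    have := h _ ⟨k + 1, rfl, by omega, hS⟩
    norm_cast at this
    omega
  · rintro h _ ⟨j, rfl, hj, hSj⟩
    obtain ⟨k, rfl⟩ := Nat.exists_eq_add_of_le' hj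
    by_contra! hlt
    norm_cast at hlt
    linarith [h k (by omega)]

variable [MeasurableSpace Ω] {P : Measure Ω} [IsProbabilityMeasure P]

lemma measure_signs_preimage_singleton (hmeas : ∀ i, Measurable (X i)) (hindep : iIndepFun X P)
    (hdist : ∀ i, IdentDistrib (X i) (X 0) P P) (h1 : P {ω | X 0 ω = 1} = 1 / 2)
    (n : ℕ) (v : Fin n → Bool) :
    P (signs X n ⁻¹' {v}) = (1 / 2) ^ n := by
  have hup (i : ℕ) : P (X i ⁻¹' {1}) = 1 / 2 :=
    ((hdist i).measure_mem_eq (measurableSet_singleton 1)).trans h1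
  have hstep (i : ℕ) (b : Bool) : P (X i ⁻¹' (if b then {1} else {1}ᶜ)) = 1 / 2 := by
    cases b
    · rw [if_neg Bool.false_ne_true, Set.preimage_compl,
        prob_compl_eq_one_sub (hmeas i (measurableSet_singleton 1)), hup, one_div,
        ENNReal.one_sub_inv_two]
    · exact hup i
  rw [signs_preimage_singleton, (hindep.precomp Fin.val_injective).meas_iInter
    fun i => ⟨_, by split <;> measurability, rfl⟩]
  simp [hstep]

lemma measure_signs_preimage (hmeas : ∀ i, Measurable (X i)) (hindep : iIndepFun X P)
    (hdist : ∀ i, IdentDistrib (X i) (X 0) P P) (h1 : P {ω | X 0 ω = 1} = 1 / 2)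
    {n : ℕ} (Q : Finset (Fin n → Bool)) :
    P (signs X n ⁻¹' Q) = #Q * (1 / 2) ^ n := by
  rw [← sum_measure_preimage_singleton Q fun v _ => by
    rw [signs_preimage_singleton]; exact .iInter fun i => hmeas i (by split <;> measurability)]
  simp [measure_signs_preimage_singleton hmeas hindep hdist h1]

lemma measure_eq_card_mul_of_ae_iff (hmeas : ∀ i, Measurable (X i)) (hindep : iIndepFun X P)
    (hdist : ∀ i, IdentDistrib (X i) (X 0) P P) (h1 : P {ω | X 0 ω = 1} = 1 / 2)
    {n : ℕ} (Q : (Fin n → Bool) → Prop) [DecidablePred Q] {E : Set Ω}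
    (hE : ∀ᵐ ω ∂P, ω ∈ E ↔ Q (signs X n ω)) :
    P E = #{v | Q v} * (1 / 2) ^ n := by
  rw [← measure_signs_preimage hmeas hindep hdist h1]
  refine measure_congr (Filter.eventuallyEq_set.2 ?_)
  simpa using hE

lemma ae_eq_one_or_eq_neg_one (hmeas : ∀ i, Measurable (X i))
    (hdist : ∀ i, IdentDistrib (X i) (X 0) P P)
    (h1 : P {ω | X 0 ω = 1} = 1 / 2) (h2 : P {ω | X 0 ω = -1} = 1 / 2) :
    ∀ᵐ ω ∂P, ∀ i, X i ω = 1 ∨ X i ω = -1 := by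
  have hmeas0 (x : ℝ) : MeasurableSet {ω | X 0 ω = x} := hmeas 0 (measurableSet_singleton x)
  have h0 : ∀ᵐ ω ∂P, X 0 ω = 1 ∨ X 0 ω = -1 := by
    refine mem_ae_iff.2 ((prob_compl_eq_zero_iff ((hmeas0 1).union (hmeas0 (-1)))).2 ?_)
    rw [measure_union _ (hmeas0 (-1)), h1, h2, one_div, ENNReal.inv_two_add_inv_two]
    exact Set.disjoint_left.2 fun ω (h : X 0 ω = 1) (h' : X 0 ω = -1) => by linarith
  exact ae_all_iff.2 fun i => (hdist i).symm.ae_snd (p := fun x => x = 1 ∨ x = -1)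
    ((measurableSet_singleton 1).union (measurableSet_singleton (-1))) h0

end Probability

end SimpleRandomWalk

open SimpleRandomWalk in
/-- survival probability of the simple symmetric random walk. -/
theorem ssrw_survival
    {Ω : Type*} [MeasurableSpace Ω] (P : Measure Ω) [IsProbabilityMeasure P]
    (X : ℕ → Ω → ℝ) (hmeas : ∀ i, Measurable (X i))
    (hindep : iIndepFun X P)
    (hdist : ∀ i, IdentDistrib (X i) (X 0) P P)
    (h1 : P {ω | X 0 ω = 1} = 1/2) (h2 : P {ω | X 0 ω = -1} = 1/2)
    (S : ℕ → Ω → ℝ) (hS : ∀ n ω, S n ω = ∑ i ∈ range n, X i ω)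
    (n : ℕ) (hn : 1 ≤ n) :
    (P {ω | (n : ℕ∞) < hittingTime S ω}).toReal
      = (1/2) * (P {ω | S (n-1) ω = 0 ∨ S (n-1) ω = 1}).toReal := by
  obtain ⟨m, rfl⟩ := Nat.exists_eq_add_of_le' hn
  have hwalk : ∀ᵐ ω ∂P, ∀ N, ∀ k ≤ N, S k ω = walk (signs X N ω) k := by
    filter_upwards [ae_eq_one_or_eq_neg_one hmeas hdist h1 h2] with ω hω N k hk
    rw [hS, sum_range_eq_walk_signs hω hk]
  have hsurvival : P {ω | ((m + 1 : ℕ) : ℕ∞) < hittingTime S ω}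
      = #{v : Fin (m + 1) → Bool | ∀ k < m + 1, 0 < walk v (k + 1)} * (1 / 2) ^ (m + 1) := by
    refine measure_eq_card_mul_of_ae_iff hmeas hindep hdist h1 _ ?_
    filter_upwards [hwalk] with ω hω
    rw [natCast_lt_hittingTime_iff]
    exact forall₂_congr fun k hk => by rw [hω _ _ hk, Int.cast_pos]
  have hend : P {ω | S m ω = 0 ∨ S m ω = 1}
      = #{v : Fin m → Bool | walk v m = 0 ∨ walk v m = 1} * (1 / 2) ^ m := by
    refine measure_eq_card_mul_of_ae_iff hmeas hindep hdist h1 _ ?_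
    filter_upwards [hwalk] with ω hω
    rw [hω m m le_rfl]
    norm_cast
  rw [Nat.add_sub_cancel, hsurvival, hend, card_forall_walk_pos_eq_card_walk_eq_zero_or_one]
  simp [ENNReal.toReal_mul, pow_succ]
  ring
end

section
/- Let $X_1, X_2, \ldots$ be i.i.d. with symmetric, aperiodic lattice distribution on $\mathbb{Z}$, zero mean and finite variance. With $S_n = X_1 + \cdots + X_n$ and $\tau = \inf\{n \ge 1: S_n \le 0\}$, for every integer $x \ge 1$ and $n \ge 2$: $\mathbb{P}(S_n \ge x, \tau > n) = \sum_{k=1}^{n-1} \sum_{y=0}^{\infty} \mathbb{P}(S_k = -y, \tau = k)\, \mathbb{P}(S_{n-k} \in [x-y, x+y)) + \mathbb{P}(S_n \le -x, \tau = n)$. -/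
open MeasureTheory ProbabilityTheory Finset

/-- First time `n ≥ 1` at which the integer-valued walk `S` is non-positive. -/
noncomputable def hittingTimeZ {Ω : Type*} (S : ℕ → Ω → ℤ) (ω : Ω) : ℕ∞ :=
  sInf {m : ℕ∞ | ∃ n : ℕ, m = n ∧ 1 ≤ n ∧ S n ω ≤ 0}

/-!
Split according to the first time `τ = k` at which the walk enters `(-∞, 0]` and the position
`-y` it occupies then. At the fixed time `k` the increments after `k` are independent of the
past, so the walk continues as an independent copy of `S` started at `-y`. The event `τ = n`
is impossible on `{S n ≥ x}`, and `τ > n` is impossible on `{S n ≤ -x}`. By symmetry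
`P(S n ≥ x) = P(S n ≤ -x)` and `P(S m ≤ y - x) = P(S m ∈ [x - y, x + y)) + P(S m ≥ x + y)`,
so comparing the two decompositions the terms `P(S (n - k) ≥ x + y)` cancel.
-/

section HittingTime

variable {Ω : Type*} {S : ℕ → Ω → ℤ} {ω : Ω}

lemma lt_hittingTimeZ_iff (n : ℕ) :
    (n : ℕ∞) < hittingTimeZ S ω ↔ ∀ k, 1 ≤ k → k ≤ n → 0 < S k ω := by
  rw [← not_iff_not, not_lt, ← ENat.lt_add_one_iff (ENat.natCast_ne_top n), hittingTimeZ,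
    sInf_lt_iff]
  push Not
  constructor
  · rintro ⟨_, ⟨k, rfl, hk1, hk0⟩, hkn⟩
    exact ⟨k, hk1, Nat.lt_add_one_iff.1 (by exact_mod_cast hkn), hk0⟩
  · rintro ⟨k, hk1, hkn, hk0⟩
    exact ⟨k, ⟨k, rfl, hk1, hk0⟩, by exact_mod_cast Nat.lt_add_one_of_le hkn⟩

lemma one_le_and_nonpos_of_hittingTimeZ_eq {n : ℕ} (h : hittingTimeZ S ω = n) :
    1 ≤ n ∧ S n ω ≤ 0 := by
  have hne : {m : ℕ∞ | ∃ n : ℕ, m = n ∧ 1 ≤ n ∧ S n ω ≤ 0}.Nonempty := by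
    by_contra hemp
    rw [Set.not_nonempty_iff_eq_empty] at hemp
    rw [hittingTimeZ, hemp, sInf_empty] at h
    exact ENat.top_ne_natCast n h
  obtain ⟨k, hk, hk1, hk0⟩ := csInf_mem hne
  obtain rfl : k = n := by exact_mod_cast hk.symm.trans h
  exact ⟨hk1, hk0⟩

lemma hittingTimeZ_eq_add_one_iff (n : ℕ) :
    hittingTimeZ S ω = (n + 1 : ℕ) ↔
      (n : ℕ∞) < hittingTimeZ S ω ∧ ¬ ((n + 1 : ℕ) : ℕ∞) < hittingTimeZ S ω := by
  rw [not_lt, le_antisymm_iff, and_comm, Nat.cast_add_one,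
    ENat.add_one_le_iff (ENat.natCast_ne_top n)]

lemma measurableSet_lt_hittingTimeZ {m : MeasurableSpace Ω} {n : ℕ}
    (hS : ∀ j ≤ n, Measurable[m] (S j)) : MeasurableSet[m] {ω | (n : ℕ∞) < hittingTimeZ S ω} := by
  simp_rw [lt_hittingTimeZ_iff, Set.ofPred_forall]
  exact .iInter fun k => .iInter fun _ => .iInter fun hkn => hS k hkn .of_discrete

lemma measurableSet_hittingTimeZ_eq {m : MeasurableSpace Ω} {n : ℕ}
    (hS : ∀ j ≤ n, Measurable[m] (S j)) : MeasurableSet[m] {ω | hittingTimeZ S ω = n} := by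
  obtain _ | n := n
  · convert MeasurableSet.empty
    refine Set.eq_empty_of_forall_notMem fun ω h => ?_
    have := (one_le_and_nonpos_of_hittingTimeZ_eq (n := 0) (S := S) (by exact_mod_cast h)).1
    omega
  · simp_rw [hittingTimeZ_eq_add_one_iff, Set.ofPred_and]
    exact (measurableSet_lt_hittingTimeZ fun j hj => hS j (by omega)).inter
      (measurableSet_lt_hittingTimeZ hS).compl

end HittingTime

section FirstPassage

variable {Ω : Type*} [MeasurableSpace Ω] (μ : Measure Ω) {S : ℕ → Ω → ℤ}

lemma measure_eq_add_sum_inter_hittingTimeZ_eq (hS : ∀ j, Measurable (S j)) {Q : Set Ω}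
    (hQ : MeasurableSet Q) (n : ℕ) :
    μ Q = μ (Q ∩ {ω | (n : ℕ∞) < hittingTimeZ S ω})
      + ∑ k ∈ Icc 1 n, μ (Q ∩ {ω | hittingTimeZ S ω = k}) := by
  induction n with
  | zero =>
    have hpos (ω : Ω) : (0 : ℕ∞) < hittingTimeZ S ω := by
      exact_mod_cast (lt_hittingTimeZ_iff 0).2 (by omega)
    simp [hpos]
  | succ n ih =>
    have hsplit : Q ∩ {ω | (n : ℕ∞) < hittingTimeZ S ω}
        = Q ∩ {ω | ((n + 1 : ℕ) : ℕ∞) < hittingTimeZ S ω}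
          ∪ Q ∩ {ω | hittingTimeZ S ω = (n + 1 : ℕ)} := by
      ext ω
      have hmono : ((n + 1 : ℕ) : ℕ∞) < hittingTimeZ S ω → (n : ℕ∞) < hittingTimeZ S ω :=
        (Nat.cast_lt.2 n.lt_succ_self).trans
      simp only [Set.mem_inter_iff, Set.mem_union, Set.mem_ofPred_eq, hittingTimeZ_eq_add_one_iff]
      tauto
    have hdisj : Disjoint (Q ∩ {ω | ((n + 1 : ℕ) : ℕ∞) < hittingTimeZ S ω})
        (Q ∩ {ω | hittingTimeZ S ω = (n + 1 : ℕ)}) :=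
      Set.disjoint_left.2 fun ω h1 h2 => ((hittingTimeZ_eq_add_one_iff n).1 h2.2).2 h1.2
    rw [ih, hsplit, measure_union hdisj (hQ.inter (measurableSet_hittingTimeZ_eq fun j _ => hS j)),
      sum_Icc_succ_top (by omega)]
    ring

lemma measure_inter_hittingTimeZ_eq_eq_tsum (hS : ∀ j, Measurable (S j)) {Q : Set Ω}
    (hQ : MeasurableSet Q) (k : ℕ) :
    μ (Q ∩ {ω | hittingTimeZ S ω = k})
      = ∑' y : ℕ, μ (Q ∩ {ω | S k ω = -(y : ℤ) ∧ hittingTimeZ S ω = k}) := by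
  have hU : Q ∩ {ω | hittingTimeZ S ω = k}
      = ⋃ y : ℕ, Q ∩ {ω | S k ω = -(y : ℤ) ∧ hittingTimeZ S ω = k} := by
    ext ω
    simp only [Set.mem_inter_iff, Set.mem_iUnion, Set.mem_ofPred_eq]
    constructor
    · rintro ⟨hQω, hτ⟩
      have := (one_le_and_nonpos_of_hittingTimeZ_eq hτ).2
      exact ⟨(-S k ω).toNat, hQω, by omega, hτ⟩
    · rintro ⟨y, hQω, -, hτ⟩
      exact ⟨hQω, hτ⟩
  rw [hU, measure_iUnion]
  · intro y y' hyy'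
    exact Set.disjoint_left.2 fun ω h h' => hyy' (by have := h.2.1; have := h'.2.1; omega)
  · refine fun y => hQ.inter ?_
    rw [Set.ofPred_and]
    exact (hS k (measurableSet_singleton (-(y : ℤ)))).inter
      (measurableSet_hittingTimeZ_eq fun j _ => hS j)

end FirstPassage

section IndependentSequence

variable {Ω β : Type*} [MeasurableSpace β] {X : ℕ → Ω → β}

lemma measurable_sum_range_of_subset [AddCommMonoid β] [MeasurableAdd₂ β] {s : Set ℕ}
    {f : ℕ → ℕ} {m : ℕ} (hf : ∀ i < m, f i ∈ s) :
    Measurable[⨆ i ∈ s, MeasurableSpace.comap (X i) inferInstance]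
      (fun ω => ∑ i ∈ range m, X (f i) ω) :=
  Finset.measurable_sum _ fun i hi => (comap_measurable (X (f i))).mono
    (le_iSup₂ (f := fun j _ => MeasurableSpace.comap (X j) inferInstance) (f i)
      (hf i (mem_range.1 hi))) le_rfl

lemma measurable_partialSum_of_le [AddCommMonoid β] [MeasurableAdd₂ β] {S : ℕ → Ω → β}
    (hS : ∀ n ω, S n ω = ∑ i ∈ range n, X i ω) {j k : ℕ} (hjk : j ≤ k) :
    Measurable[⨆ i ∈ Set.Iio k, MeasurableSpace.comap (X i) inferInstance] (S j) := by
  rw [show S j = fun ω => ∑ i ∈ range j, X i ω from funext (hS j)]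
  exact measurable_sum_range_of_subset (f := id) fun i hi => Set.mem_Iio.2 (hi.trans_le hjk)

variable [MeasurableSpace Ω] {P : Measure Ω}

lemma identDistrib_shift (hindep : iIndepFun X P) (hdist : ∀ i, IdentDistrib (X i) (X 0) P P)
    (k : ℕ) : IdentDistrib (fun ω i => X (k + i) ω) (fun ω i => X i ω) P P :=
  .pi (fun i => (hdist _).trans (hdist i).symm) (hindep.precomp (add_right_injective k)) hindep

lemma identDistrib_neg [Neg β] [MeasurableNeg β] (hindep : iIndepFun X P)
    (hdist : ∀ i, IdentDistrib (X i) (X 0) P P) (hsymm : IdentDistrib (X 0) (fun ω => -X 0 ω) P P) :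
    IdentDistrib (fun ω i => -X i ω) (fun ω i => X i ω) P P :=
  .pi (fun i => ((hdist i).comp measurable_neg).trans (hsymm.symm.trans (hdist i).symm))
    (hindep.comp (fun _ => Neg.neg) fun _ => measurable_neg) hindep

lemma indep_iSup_Iio_iSup_Ici (hmeas : ∀ i, Measurable (X i)) (hindep : iIndepFun X P) (k : ℕ) :
    Indep (⨆ i ∈ Set.Iio k, MeasurableSpace.comap (X i) inferInstance)
      (⨆ i ∈ Set.Ici k, MeasurableSpace.comap (X i) inferInstance) P :=
  indep_iSup_of_disjoint (fun i => (hmeas i).comap_le) ((iIndepFun_iff_iIndep _ _ _).1 hindep)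
    (Set.Iio_disjoint_Ici le_rfl)

end IndependentSequence

section RandomWalk

variable {Ω : Type*} [MeasurableSpace Ω] {P : Measure Ω} {X : ℕ → Ω → ℤ} {S : ℕ → Ω → ℤ}

lemma measurable_partialSum (hS : ∀ n ω, S n ω = ∑ i ∈ range n, X i ω)
    (hmeas : ∀ i, Measurable (X i)) (n : ℕ) : Measurable (S n) := by
  rw [show S n = fun ω => ∑ i ∈ range n, X i ω from funext (hS n)]
  exact Finset.measurable_sum _ fun i _ => hmeas i

lemma measure_partialSum_le_eq (hS : ∀ n ω, S n ω = ∑ i ∈ range n, X i ω)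
    (hindep : iIndepFun X P) (hdist : ∀ i, IdentDistrib (X i) (X 0) P P)
    (hsymm : IdentDistrib (X 0) (fun ω => -X 0 ω) P P) (m : ℕ) (c : ℤ) :
    P {ω | S m ω ≤ c} = P {ω | -c ≤ S m ω} := by
  have := ((identDistrib_neg hindep hdist hsymm).comp
    (Finset.measurable_sum (range m) fun i _ => measurable_pi_apply i)).measure_mem_eq
    (s := Set.Iic c) .of_discrete
  convert this.symm using 2 <;> ext ω <;> simp [hS, sum_neg_distrib]
  omega

lemma measure_neg_add_partialSum_le (hS : ∀ n ω, S n ω = ∑ i ∈ range n, X i ω)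
    (hmeas : ∀ i, Measurable (X i)) (hindep : iIndepFun X P)
    (hdist : ∀ i, IdentDistrib (X i) (X 0) P P) (hsymm : IdentDistrib (X 0) (fun ω => -X 0 ω) P P)
    (m : ℕ) (x : ℤ) (y : ℕ) :
    P {ω | -(y : ℤ) + S m ω ≤ -x}
      = P {ω | x - y ≤ S m ω ∧ S m ω < x + y} + P {ω | x ≤ -(y : ℤ) + S m ω} := by
  have hdisj : Disjoint {ω | x - y ≤ S m ω ∧ S m ω < x + y} {ω | x ≤ -(y : ℤ) + S m ω} :=
    Set.disjoint_left.2 fun ω h h' => by simp only [Set.mem_ofPred_eq] at h h'; omega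
  rw [← measure_union hdisj
    (measurable_partialSum hS hmeas m (t := {z | x ≤ -(y : ℤ) + z}) .of_discrete)]
  calc P {ω | -(y : ℤ) + S m ω ≤ -x} = P {ω | S m ω ≤ y - x} := by
        congr 1; ext ω; simp only [Set.mem_ofPred_eq]; omega
    _ = P {ω | x - y ≤ S m ω} := by rw [measure_partialSum_le_eq hS hindep hdist hsymm, neg_sub]
    _ = _ := by congr 1; ext ω; simp only [Set.mem_ofPred_eq, Set.mem_union]; omega

lemma measure_inter_partialSum_mem (hS : ∀ n ω, S n ω = ∑ i ∈ range n, X i ω)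
    (hmeas : ∀ i, Measurable (X i)) (hindep : iIndepFun X P)
    (hdist : ∀ i, IdentDistrib (X i) (X 0) P P) {k n : ℕ} (hkn : k ≤ n) {A : Set Ω}
    (hA : MeasurableSet[⨆ i ∈ Set.Iio k, MeasurableSpace.comap (X i) inferInstance] A)
    {z : ℤ} (hAz : ∀ ω ∈ A, S k ω = z) (C : Set ℤ) :
    P (A ∩ {ω | S n ω ∈ C}) = P A * P {ω | z + S (n - k) ω ∈ C} := by
  set T : Ω → ℤ := fun ω => ∑ i ∈ range (n - k), X (k + i) ω
  have hST (ω : Ω) : S n ω = S k ω + T ω := by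
    rw [hS, hS, ← sum_range_add, Nat.add_sub_cancel' hkn]
  have hT : MeasurableSet[⨆ i ∈ Set.Ici k, MeasurableSpace.comap (X i) inferInstance]
      {ω | z + T ω ∈ C} :=
    measurable_sum_range_of_subset (fun i _ => Set.mem_Ici.2 (Nat.le_add_right k i))
      (t := (fun t => z + t) ⁻¹' C) .of_discrete
  calc P (A ∩ {ω | S n ω ∈ C}) = P (A ∩ {ω | z + T ω ∈ C}) := by
        congr 1
        ext ω
        simp only [Set.mem_inter_iff, Set.mem_ofPred_eq, hST]
        exact and_congr_right fun hω => by rw [hAz ω hω]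
    _ = P A * P {ω | z + T ω ∈ C} :=
        (Indep_iff _ _ P).1 (indep_iSup_Iio_iSup_Ici hmeas hindep k) _ _ hA hT
    _ = P A * P {ω | z + S (n - k) ω ∈ C} := by
        simp_rw [hS]
        congr 1
        exact ((identDistrib_shift hindep hdist k).comp
          (u := fun v : ℕ → ℤ => z + ∑ i ∈ range (n - k), v i)
          (measurable_const.add (Finset.measurable_sum _ fun i _ => measurable_pi_apply i))
          ).measure_mem_eq (s := C) .of_discrete

theorem measure_partialSum_mem_eq (hS : ∀ n ω, S n ω = ∑ i ∈ range n, X i ω)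
    (hmeas : ∀ i, Measurable (X i)) (hindep : iIndepFun X P)
    (hdist : ∀ i, IdentDistrib (X i) (X 0) P P) {n : ℕ} (hn : 1 ≤ n) (C : Set ℤ) :
    P {ω | S n ω ∈ C} = P {ω | S n ω ∈ C ∧ (n : ℕ∞) < hittingTimeZ S ω}
      + ∑ k ∈ Icc 1 (n - 1), ∑' y : ℕ, P {ω | S k ω = -(y : ℤ) ∧ hittingTimeZ S ω = k}
          * P {ω | -(y : ℤ) + S (n - k) ω ∈ C}
      + P {ω | S n ω ∈ C ∧ hittingTimeZ S ω = n} := by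
  have hSm := measurable_partialSum hS hmeas
  obtain ⟨n, rfl⟩ : ∃ m, n = m + 1 := ⟨n - 1, by omega⟩
  have hQ : MeasurableSet {ω | S (n + 1) ω ∈ C} := hSm (n + 1) .of_discrete
  rw [measure_eq_add_sum_inter_hittingTimeZ_eq P hSm hQ, sum_Icc_succ_top (by omega),
    Nat.add_sub_cancel, ← add_assoc]
  congr 2
  refine sum_congr rfl fun k hk => ?_
  rw [measure_inter_hittingTimeZ_eq_eq_tsum P hSm hQ]
  refine tsum_congr fun y => ?_
  rw [Set.inter_comm]
  refine measure_inter_partialSum_mem hS hmeas hindep hdist (by rw [mem_Icc] at hk; omega) ?_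
    (fun ω h => h.1) C
  rw [Set.ofPred_and]
  exact (measurable_partialSum_of_le hS le_rfl (measurableSet_singleton _)).inter
    (measurableSet_hittingTimeZ_eq fun j hj => measurable_partialSum_of_le hS hj)

end RandomWalk

lemma ENNReal.toReal_sum_tsum_mul {α β : Type*} {s : Finset α} {f g : α → β → ENNReal}
    (hf : ∀ a b, f a b ≠ ⊤) (hg : ∀ a b, g a b ≠ ⊤) (h : ∑ a ∈ s, ∑' b, f a b * g a b ≠ ⊤) :
    (∑ a ∈ s, ∑' b, f a b * g a b).toReal = ∑ a ∈ s, ∑' b, (f a b).toReal * (g a b).toReal := by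
  rw [ENNReal.toReal_sum fun a ha => ENNReal.sum_ne_top.1 h a ha]
  refine sum_congr rfl fun a _ => ?_
  rw [ENNReal.tsum_toReal_eq fun b => ENNReal.mul_ne_top (hf a b) (hg a b)]
  simp_rw [ENNReal.toReal_mul]

theorem symmetric_lattice_representation_general
    {Ω : Type*} [MeasurableSpace Ω] (P : Measure Ω) [IsProbabilityMeasure P]
    (X : ℕ → Ω → ℤ) (hmeas : ∀ i, Measurable (X i))
    (hindep : iIndepFun X P)
    (hdist : ∀ i, IdentDistrib (X i) (X 0) P P)
    (hsymm : IdentDistrib (X 0) (fun ω => -X 0 ω) P P)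
    (S : ℕ → Ω → ℤ) (hS : ∀ n ω, S n ω = ∑ i ∈ range n, X i ω)
    (x : ℤ) (hx : 1 ≤ x) (n : ℕ) (hn : 2 ≤ n) :
    (P {ω | x ≤ S n ω ∧ (n : ℕ∞) < hittingTimeZ S ω}).toReal
      = (∑ k ∈ Icc 1 (n-1), ∑' y : ℕ,
          (P {ω | S k ω = -(y : ℤ) ∧ hittingTimeZ S ω = (k : ℕ∞)}).toReal
            * (P {ω | x - (y : ℤ) ≤ S (n - k) ω ∧ S (n - k) ω < x + (y : ℤ)}).toReal)
        + (P {ω | S n ω ≤ -x ∧ hittingTimeZ S ω = (n : ℕ∞)}).toReal := by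
  have hup := measure_partialSum_mem_eq hS hmeas hindep hdist (by omega : 1 ≤ n) (Set.Ici x)
  have hdown := measure_partialSum_mem_eq hS hmeas hindep hdist (by omega : 1 ≤ n) (Set.Iic (-x))
  simp only [Set.mem_Ici, Set.mem_Iic] at hup hdown
  have hup_hit : {ω | x ≤ S n ω ∧ hittingTimeZ S ω = n} = ∅ :=
    Set.eq_empty_of_forall_notMem fun ω ⟨hxS, hτ⟩ => by
      have := (one_le_and_nonpos_of_hittingTimeZ_eq hτ).2; omega
  have hdown_survive : {ω | S n ω ≤ -x ∧ (n : ℕ∞) < hittingTimeZ S ω} = ∅ :=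
    Set.eq_empty_of_forall_notMem fun ω ⟨hSx, hτ⟩ => by
      have := (lt_hittingTimeZ_iff n).1 hτ n (by omega) le_rfl; omega
  rw [hup_hit, measure_empty, add_zero] at hup
  rw [hdown_survive, measure_empty, zero_add] at hdown
  simp_rw [measure_neg_add_partialSum_le hS hmeas hindep hdist hsymm, mul_add, ENNReal.tsum_add,
    sum_add_distrib] at hdown
  have hreflect := measure_partialSum_le_eq hS hindep hdist hsymm n (-x)
  rw [neg_neg, hup, hdown, add_right_comm] at hreflect
  have hsurv := (ENNReal.add_left_inj (ne_top_of_le_ne_top (measure_ne_top P _)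
    (le_add_self.trans_eq hup.symm))).1 hreflect.symm
  have hfin := (ENNReal.add_ne_top.1 (hsurv ▸ measure_ne_top P _)).1
  rw [hsurv, ENNReal.toReal_add hfin (measure_ne_top P _), ENNReal.toReal_sum_tsum_mul
    (fun _ _ => measure_ne_top P _) (fun _ _ => measure_ne_top P _) hfin]

/-- reflection-type representation for symmetric aperiodic lattice walks. -/
theorem symmetric_lattice_representation
    {Ω : Type*} [MeasurableSpace Ω] (P : Measure Ω) [IsProbabilityMeasure P]
    (X : ℕ → Ω → ℤ) (hmeas : ∀ i, Measurable (X i))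
    (hindep : iIndepFun X P)
    (hdist : ∀ i, IdentDistrib (X i) (X 0) P P)
    (hsymm : IdentDistrib (X 0) (fun ω => -X 0 ω) P P)
    (hmean : ∫ ω, (X 0 ω : ℝ) ∂P = 0)
    (hvar : Integrable (fun ω => (X 0 ω : ℝ)^2) P)
    (haperiodic : ∀ d : ℤ, 0 < d → (∀ᵐ ω ∂P, d ∣ X 0 ω) → d = 1)
    (S : ℕ → Ω → ℤ) (hS : ∀ n ω, S n ω = ∑ i ∈ range n, X i ω)
    (x : ℤ) (hx : 1 ≤ x) (n : ℕ) (hn : 2 ≤ n) :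
    (P {ω | x ≤ S n ω ∧ (n : ℕ∞) < hittingTimeZ S ω}).toReal
      = (∑ k ∈ Icc 1 (n-1), ∑' y : ℕ,
          (P {ω | S k ω = -(y : ℤ) ∧ hittingTimeZ S ω = (k : ℕ∞)}).toReal
            * (P {ω | x - (y : ℤ) ≤ S (n - k) ω ∧ S (n - k) ω < x + (y : ℤ)}).toReal)
        + (P {ω | S n ω ≤ -x ∧ hittingTimeZ S ω = (n : ℕ∞)}).toReal :=
  symmetric_lattice_representation_general P X hmeas hindep hdist hsymm S hS x hx n hn
end

section
/- Let $g_A(x) = \frac{3}{\pi A}\left(\frac{1 - \cos(Ax)}{Ax^2}\right)^2$ for $A > 0$. Then $g_A$ is a probability density on $\mathbb{R}$, and a random variable $U$ with density $g_A$ satisfies $\mathbb{E}|U| = \frac{6 \ln 2}{\pi A}$. -/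
/-!
After the substitution `y = A x`, and by evenness, everything reduces to
`∫₀^∞ (1 - cos y)² / y⁴ dy = π / 6` and `∫₀^∞ (1 - cos y)² / y³ dy = log 2`.
Writing `1 / y^(k+1) = (1 / k!) ∫₀^∞ t^k e^(-t y) dt` and exchanging the integrals turns these into
`(1 / k!) ∫₀^∞ t^k L(t) dt`, where `L(t) = 6 / (t (t² + 1) (t² + 4))` is the Laplace transform of
`(1 - cos y)² = 3/2 - 2 cos y + (cos 2y) / 2`. The remaining rational integrals are elementary,
with antiderivatives built from `arctan` (for `k = 3`) and `log` (for `k = 2`).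
-/

open Set MeasureTheory Real Filter Topology
open scoped Nat

namespace Function.Even

variable {E : Type*} [NormedAddCommGroup E] {f : ℝ → E}

theorem integrable_of_integrableOn_Ioi (hf : f.Even) (h : IntegrableOn f (Ioi 0)) :
    Integrable f := by
  have hneg : IntegrableOn f (Iio 0) := by
    have := IntegrableOn.comp_neg_Iio (c := (0 : ℝ)) (by rwa [neg_zero])
    rwa [funext hf] at this
  rw [← integrableOn_univ, ← Iio_union_Ici (a := (0 : ℝ))]
  exact hneg.union ((integrableOn_Ici_iff_integrableOn_Ioi).mpr h)

theorem integral_eq_two_smul_integral_Ioi [NormedSpace ℝ E] (hf : f.Even)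
    (h : IntegrableOn f (Ioi 0)) : ∫ x, f x = (2 : ℝ) • ∫ x in Ioi 0, f x := by
  have hIic : ∫ x in Iic 0, f x = ∫ x in Ioi 0, f x := by
    simpa only [funext hf, neg_zero] using integral_comp_neg_Iic 0 f
  rw [← intervalIntegral.integral_Iic_add_Ioi (hf.integrable_of_integrableOn_Ioi h).integrableOn h,
    hIic, two_smul]

end Function.Even

theorem integral_Ioi_pow_mul_exp_neg_mul (n : ℕ) {r : ℝ} (hr : 0 < r) :
    ∫ t in Ioi 0, t ^ n * exp (-(r * t)) = n ! / r ^ (n + 1) := by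
  have h := integral_rpow_mul_exp_neg_mul_Ioi (a := n + 1) (by positivity) hr
  rw [add_sub_cancel_right, Gamma_nat_eq_factorial, ← Nat.cast_add_one, rpow_natCast] at h
  simp only [rpow_natCast] at h
  rw [h, one_div, inv_pow]
  ring

theorem exp_neg_mul_mul_cos_eq_re (t a x : ℝ) :
    exp (-(t * x)) * cos (a * x) = (Complex.exp (((-t : ℝ) + a * Complex.I) * x)).re := by
  rw [Complex.exp_re]
  simp

theorem integrableOn_exp_neg_mul_mul_cos {t : ℝ} (ht : 0 < t) (a : ℝ) :
    IntegrableOn (fun x => exp (-(t * x)) * cos (a * x)) (Ioi 0) := by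
  simp_rw [exp_neg_mul_mul_cos_eq_re]
  exact (integrableOn_exp_mul_complex_Ioi (by simpa using ht) 0).re

theorem integral_Ioi_exp_neg_mul_mul_cos {t : ℝ} (ht : 0 < t) (a : ℝ) :
    ∫ x in Ioi 0, exp (-(t * x)) * cos (a * x) = t / (t ^ 2 + a ^ 2) := by
  have hz : (((-t : ℝ) : ℂ) + a * Complex.I).re < 0 := by simpa using ht
  simp_rw [exp_neg_mul_mul_cos_eq_re]
  have hre := integral_re (𝕜 := ℂ) (integrableOn_exp_mul_complex_Ioi hz 0)
  simp only [RCLike.re_to_complex] at hre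
  rw [hre, integral_exp_mul_complex_Ioi hz 0, Complex.ofReal_zero, mul_zero, Complex.exp_zero,
    neg_div, one_div, Complex.neg_re, Complex.inv_re, Complex.normSq_add_mul_I]
  simp only [Complex.add_re, Complex.ofReal_re, Complex.re_ofReal_mul, Complex.I_re, mul_zero,
    add_zero, neg_sq]
  ring

theorem integral_Ioi_one_sub_cos_sq_mul_exp_neg_mul {t : ℝ} (ht : 0 < t) :
    ∫ x in Ioi 0, (1 - cos x) ^ 2 * exp (-(t * x)) = 6 / (t * (t ^ 2 + 1) * (t ^ 2 + 4)) := by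
  set L : ℝ → ℝ → ℝ := fun a x => exp (-(t * x)) * cos (a * x)
  have hL (a : ℝ) : IntegrableOn (L a) (Ioi 0) := integrableOn_exp_neg_mul_mul_cos ht a
  have hexpand (x : ℝ) :
      (1 - cos x) ^ 2 * exp (-(t * x)) = 3 / 2 * L 0 x - 2 * L 1 x + 1 / 2 * L 2 x := by
    simp only [L, zero_mul, cos_zero, one_mul, cos_two_mul]
    ring
  simp_rw [hexpand]
  rw [integral_add (f := fun x => 3 / 2 * L 0 x - 2 * L 1 x)
      (((hL 0).const_mul _).sub ((hL 1).const_mul _)) ((hL 2).const_mul _),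
    integral_sub ((hL 0).const_mul _) ((hL 1).const_mul _), integral_const_mul,
    integral_const_mul, integral_const_mul]
  simp only [L, integral_Ioi_exp_neg_mul_mul_cos ht]
  field_simp
  ring

theorem factorial_mul_integral_Ioi_div_pow_succ {h : ℝ → ℝ} (hh : Measurable h) (k : ℕ)
    (hint : IntegrableOn (fun x => h x / x ^ (k + 1)) (Ioi 0)) :
    k ! * ∫ x in Ioi 0, h x / x ^ (k + 1) =
      ∫ t in Ioi 0, t ^ k * ∫ x in Ioi 0, h x * exp (-(t * x)) := by
  set μ := volume.restrict (Ioi (0 : ℝ))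
  set F : ℝ → ℝ → ℝ := fun x t => h x * (t ^ k * exp (-(x * t)))
  have hgamma : ∀ x ∈ Ioi (0 : ℝ), ∫ t, t ^ k * exp (-(x * t)) ∂μ = k ! / x ^ (k + 1) :=
    fun x hx => integral_Ioi_pow_mul_exp_neg_mul k hx
  have hF : Integrable (Function.uncurry F) (μ.prod μ) := by
    refine (integrable_prod_iff ?_).mpr ⟨?_, ?_⟩
    · exact (hh.comp measurable_fst).aestronglyMeasurable.mul (by fun_prop)
    · refine (ae_restrict_iff' measurableSet_Ioi).mpr (ae_of_all _ fun x hx => ?_)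
      refine (Integrable.of_integral_ne_zero ?_).const_mul (h x)
      rw [hgamma x hx]
      have : (0 : ℝ) < x := hx
      positivity
    · refine (hint.norm.const_mul (k ! : ℝ)).congr ?_
      refine (ae_restrict_iff' measurableSet_Ioi).mpr (ae_of_all _ fun x hx => ?_)
      have hnorm : ∀ t ∈ Ioi (0 : ℝ), ‖F x t‖ = ‖h x‖ * (t ^ k * exp (-(x * t))) := by
        intro t ht
        have : (0 : ℝ) < t := ht
        rw [norm_mul, Real.norm_of_nonneg (by positivity : 0 ≤ t ^ k * exp (-(x * t)))]
      have : (0 : ℝ) < x := hx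
      change k ! * ‖h x / x ^ (k + 1)‖ = ∫ t, ‖F x t‖ ∂μ
      rw [setIntegral_congr_fun measurableSet_Ioi hnorm, integral_const_mul, hgamma x hx, norm_div,
        Real.norm_of_nonneg (by positivity : (0 : ℝ) ≤ x ^ (k + 1))]
      ring
  calc k ! * ∫ x in Ioi 0, h x / x ^ (k + 1) = ∫ x, ∫ t, F x t ∂μ ∂μ := by
        rw [← integral_const_mul]
        refine setIntegral_congr_fun measurableSet_Ioi fun x hx => ?_
        rw [integral_const_mul, hgamma x hx]
        ring
    _ = ∫ t, ∫ x, F x t ∂μ ∂μ := integral_integral_swap hF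
    _ = ∫ t in Ioi 0, t ^ k * ∫ x in Ioi 0, h x * exp (-(t * x)) := by
        refine setIntegral_congr_fun measurableSet_Ioi fun t _ => ?_
        rw [← integral_const_mul]
        congr 1 with x
        simp only [F, mul_comm x t]
        ring

theorem integral_Ioi_sq_div_sq_add_one_mul_sq_add_four :
    ∫ t in Ioi 0, t ^ 2 / ((t ^ 2 + 1) * (t ^ 2 + 4)) = π / 6 := by
  have hderiv (t : ℝ) : HasDerivAt (fun t => 2 / 3 * arctan (t / 2) - 1 / 3 * arctan t)
      (t ^ 2 / ((t ^ 2 + 1) * (t ^ 2 + 4))) t := by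
    have h := (((hasDerivAt_id t).div_const 2).arctan.const_mul (2 / 3)).sub
      ((hasDerivAt_arctan t).const_mul (1 / 3))
    refine h.congr_deriv ?_
    simp only [id]
    field_simp
    ring
  have hlim : Tendsto (fun t => 2 / 3 * arctan (t / 2) - 1 / 3 * arctan t) atTop
      (𝓝 (2 / 3 * (π / 2) - 1 / 3 * (π / 2))) :=
    ((tendsto_arctan_atTop.mono_right nhdsWithin_le_nhds).comp
      (tendsto_id.atTop_div_const two_pos)).const_mul _ |>.sub
      ((tendsto_arctan_atTop.mono_right nhdsWithin_le_nhds).const_mul _)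
  rw [integral_Ioi_of_hasDerivAt_of_nonneg' (fun t _ => hderiv t) (fun t _ => by positivity) hlim]
  simp only [zero_div, arctan_zero, mul_zero, sub_self, sub_zero]
  ring

theorem integral_Ioi_div_sq_add_one_mul_sq_add_four :
    ∫ t in Ioi 0, t / ((t ^ 2 + 1) * (t ^ 2 + 4)) = log 2 / 3 := by
  have hderiv (t : ℝ) : HasDerivAt (fun t => (log (t ^ 2 + 1) - log (t ^ 2 + 4)) / 6)
      (t / ((t ^ 2 + 1) * (t ^ 2 + 4))) t := by
    have h1 := ((hasDerivAt_pow 2 t).add_const 1).log (by positivity)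
    have h4 := ((hasDerivAt_pow 2 t).add_const 4).log (by positivity)
    refine ((h1.sub h4).div_const 6).congr_deriv ?_
    field_simp
    ring
  have hratio : Tendsto (fun t : ℝ => (t ^ 2 + 1) / (t ^ 2 + 4)) atTop (𝓝 1) := by
    have h : Tendsto (fun t : ℝ => 1 - 3 / (t ^ 2 + 4)) atTop (𝓝 (1 - 0)) :=
      tendsto_const_nhds.sub <| tendsto_const_nhds.div_atTop <|
        tendsto_atTop_add_const_right _ 4 (tendsto_pow_atTop two_ne_zero)
    rw [sub_zero] at h
    refine h.congr fun t => ?_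
    have : t ^ 2 + 4 ≠ 0 := by positivity
    field_simp
    ring
  have hlim : Tendsto (fun t => (log (t ^ 2 + 1) - log (t ^ 2 + 4)) / 6) atTop (𝓝 0) := by
    have h := ((continuousAt_log one_ne_zero).tendsto.comp hratio).div_const 6
    rw [log_one, zero_div] at h
    refine h.congr fun t => ?_
    rw [Function.comp_apply, log_div (by positivity) (by positivity)]
  have hlog4 : log 4 = 2 * log 2 := by
    rw [show (4 : ℝ) = 2 ^ 2 by norm_num, log_pow, Nat.cast_ofNat]
  rw [integral_Ioi_of_hasDerivAt_of_nonneg' (fun t _ => hderiv t)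
    (fun t (ht : 0 < t) => by positivity) hlim]
  simp only [ne_eq, OfNat.ofNat_ne_zero, not_false_eq_true, zero_pow, zero_add, log_one, hlog4]
  ring

theorem integrableOn_one_sub_cos_sq_div_pow {n : ℕ} (hn2 : 2 ≤ n) (hn4 : n ≤ 4) :
    IntegrableOn (fun x => (1 - cos x) ^ 2 / x ^ n) (Ioi 0) := by
  refine (integrable_inv_one_add_sq.const_mul 8).integrableOn.mono' (by fun_prop : Measurable _).aestronglyMeasurable ?_
  refine (ae_restrict_iff' measurableSet_Ioi).mpr (ae_of_all _ fun x (hx : 0 < x) => ?_)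
  have hc0 : 0 ≤ 1 - cos x := sub_nonneg.mpr (cos_le_one x)
  rw [Real.norm_of_nonneg (by positivity), div_le_iff₀ (by positivity), ← div_eq_mul_inv,
    div_mul_eq_mul_div, le_div_iff₀ (by positivity)]
  rcases le_total x 1 with hx1 | hx1
  · have hc : 1 - cos x ≤ x ^ 2 / 2 := by linarith [one_sub_sq_div_two_le_cos (x := x)]
    have hsq : (1 - cos x) ^ 2 ≤ x ^ n / 4 := by
      nlinarith [pow_le_pow_left₀ hc0 hc 2, pow_le_pow_of_le_one hx.le hx1 hn4]
    calc (1 - cos x) ^ 2 * (1 + x ^ 2) ≤ x ^ n / 4 * 2 := by gcongr; nlinarith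
      _ ≤ 8 * x ^ n := by linarith [pow_pos hx n]
  · have hc : 1 - cos x ≤ 2 := by linarith [neg_one_le_cos x]
    calc (1 - cos x) ^ 2 * (1 + x ^ 2) ≤ 2 ^ 2 * (2 * x ^ n) := by
          gcongr
          nlinarith [pow_le_pow_right₀ hx1 hn2]
      _ = 8 * x ^ n := by ring

theorem integral_Ioi_one_sub_cos_sq_div_pow_four :
    ∫ x in Ioi 0, (1 - cos x) ^ 2 / x ^ 4 = π / 6 := by
  have h := factorial_mul_integral_Ioi_div_pow_succ (h := fun x => (1 - cos x) ^ 2) (by fun_prop) 3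
    (integrableOn_one_sub_cos_sq_div_pow (by norm_num) le_rfl)
  have hlaplace : ∀ t ∈ Ioi (0 : ℝ), t ^ 3 * ∫ x in Ioi 0, (1 - cos x) ^ 2 * exp (-(t * x)) =
      6 * (t ^ 2 / ((t ^ 2 + 1) * (t ^ 2 + 4))) := fun t (ht : 0 < t) => by
    rw [integral_Ioi_one_sub_cos_sq_mul_exp_neg_mul ht]
    field_simp
  rw [setIntegral_congr_fun measurableSet_Ioi hlaplace, integral_const_mul,
    integral_Ioi_sq_div_sq_add_one_mul_sq_add_four] at h
  norm_num [Nat.factorial] at h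
  linarith

theorem integral_Ioi_one_sub_cos_sq_div_pow_three :
    ∫ x in Ioi 0, (1 - cos x) ^ 2 / x ^ 3 = log 2 := by
  have h := factorial_mul_integral_Ioi_div_pow_succ (h := fun x => (1 - cos x) ^ 2) (by fun_prop) 2
    (integrableOn_one_sub_cos_sq_div_pow (by norm_num) (by norm_num))
  have hlaplace : ∀ t ∈ Ioi (0 : ℝ), t ^ 2 * ∫ x in Ioi 0, (1 - cos x) ^ 2 * exp (-(t * x)) =
      6 * (t / ((t ^ 2 + 1) * (t ^ 2 + 4))) := fun t (ht : 0 < t) => by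
    rw [integral_Ioi_one_sub_cos_sq_mul_exp_neg_mul ht]
    field_simp
  rw [setIntegral_congr_fun measurableSet_Ioi hlaplace, integral_const_mul,
    integral_Ioi_div_sq_add_one_mul_sq_add_four] at h
  norm_num [Nat.factorial] at h
  linarith

theorem integral_one_sub_cos_sq_div_pow_four : ∫ x, (1 - cos x) ^ 2 / x ^ 4 = π / 3 := by
  have heven : Function.Even fun x : ℝ => (1 - cos x) ^ 2 / x ^ 4 := fun x => by
    simp only [cos_neg, Even.neg_pow (by decide : Even 4)]
  rw [heven.integral_eq_two_smul_integral_Ioi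
      (integrableOn_one_sub_cos_sq_div_pow (by norm_num) le_rfl),
    integral_Ioi_one_sub_cos_sq_div_pow_four, smul_eq_mul]
  ring

theorem integral_abs_mul_one_sub_cos_sq_div_pow_four :
    ∫ x, |x| * ((1 - cos x) ^ 2 / x ^ 4) = 2 * log 2 := by
  have heven : Function.Even fun x : ℝ => |x| * ((1 - cos x) ^ 2 / x ^ 4) := fun x => by
    simp only [abs_neg, cos_neg, Even.neg_pow (by decide : Even 4)]
  have hIoi : EqOn (fun x : ℝ => |x| * ((1 - cos x) ^ 2 / x ^ 4))
      (fun x => (1 - cos x) ^ 2 / x ^ 3) (Ioi 0) := fun x (hx : 0 < x) => by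
    dsimp only
    rw [abs_of_pos hx]
    field_simp
  rw [heven.integral_eq_two_smul_integral_Ioi
      ((integrableOn_one_sub_cos_sq_div_pow (by norm_num) (by norm_num)).congr_fun hIoi.symm
        measurableSet_Ioi),
    setIntegral_congr_fun measurableSet_Ioi hIoi, integral_Ioi_one_sub_cos_sq_div_pow_three,
    smul_eq_mul]

/-- `g_A(x) = (3/(πA)) ((1-cos(Ax))/(Ax²))²` is a probability
density on `ℝ` and has first absolute moment `6 ln 2/(π A)`. -/
theorem gA_is_density_with_first_moment (A : ℝ) (hA : 0 < A) :
    (∀ x : ℝ, 0 ≤ (3 / (Real.pi * A)) * ((1 - Real.cos (A * x)) / (A * x^2))^2)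
    ∧ (∫ x : ℝ, (3 / (Real.pi * A)) * ((1 - Real.cos (A * x)) / (A * x^2))^2) = 1
    ∧ (∫ x : ℝ, |x| * ((3 / (Real.pi * A)) * ((1 - Real.cos (A * x)) / (A * x^2))^2))
        = 6 * Real.log 2 / (Real.pi * A) := by
  have hrescale (x : ℝ) : (3 / (π * A)) * ((1 - cos (A * x)) / (A * x ^ 2)) ^ 2 =
      3 * A / π * ((1 - cos (A * x)) ^ 2 / (A * x) ^ 4) := by
    rcases eq_or_ne x 0 with rfl | hx
    · simp
    · field_simp
  have hrescale_abs (x : ℝ) : |x| * ((3 / (π * A)) * ((1 - cos (A * x)) / (A * x ^ 2)) ^ 2) =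
      3 / π * (|A * x| * ((1 - cos (A * x)) ^ 2 / (A * x) ^ 4)) := by
    rw [hrescale, abs_mul, abs_of_pos hA]
    field_simp
  refine ⟨fun x => by positivity, ?_, ?_⟩
  · simp_rw [hrescale]
    rw [integral_const_mul, Measure.integral_comp_mul_left (fun y => (1 - cos y) ^ 2 / y ^ 4),
      integral_one_sub_cos_sq_div_pow_four, abs_inv, abs_of_pos hA, smul_eq_mul]
    field_simp
  · simp_rw [hrescale_abs]
    rw [integral_const_mul,
      Measure.integral_comp_mul_left (fun y => |y| * ((1 - cos y) ^ 2 / y ^ 4)),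
      integral_abs_mul_one_sub_cos_sq_div_pow_four, abs_inv, abs_of_pos hA, smul_eq_mul]
    field_simp
    ring
end

section
/- For all integers $n \ge 2$, all $1 \le k \le n/2$, and all real $z$: $\left| \frac{1}{\sqrt{n-k}} e^{-z^2/(2(n-k))} - \frac{1}{\sqrt{n}} e^{-z^2/(2n)} \right| \le \frac{2^{3/2}}{e} \cdot \frac{k}{n^{3/2}}$. -/
/-!
Write `v = z²/(2t) ≤ w = z²/(2s)` for `s = n - k ≤ t = n`. The difference of the kernels is
`P - Q` with `P = (1/√s - 1/√t) e^{-v} ≥ 0` and `Q = (e^{-v} - e^{-w})/√s ≥ 0`, so it is bounded by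
the larger of the two. Since `t ≤ 2s`, `P ≤ 1/√s - 1/√t ≤ (t - s)/t^{3/2}`. For `Q`, the bound
`1 - e^{-u} ≤ u` and `w - v = v (t - s)/s` give `Q ≤ v e^{-v} (t - s)/s^{3/2}`, and `v e^{-v} ≤ 1/e`.
-/

open Real

noncomputable def heatKernel (t z : ℝ) : ℝ := 1 / √t * exp (-z ^ 2 / (2 * t))

lemma rpow_three_halves {x : ℝ} (hx : 0 ≤ x) : x ^ (3 / 2 : ℝ) = x * √x := by
  rw [show (3 / 2 : ℝ) = 1 + 1 / 2 by norm_num, rpow_add' hx (by norm_num), rpow_one,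
    sqrt_eq_rpow]

lemma exp_one_le_two_rpow_three_halves : exp 1 ≤ 2 ^ (3 / 2 : ℝ) := by
  have h2 : (1.414 : ℝ) ≤ √2 := le_sqrt_of_sq_le (by norm_num)
  rw [rpow_three_halves zero_le_two]
  linarith [exp_one_lt_d9]

lemma exp_neg_sub_exp_neg_le (v w : ℝ) :
    exp (-v) - exp (-w) ≤ (w - v) * exp (-v) := by
  have key : exp (-w) = exp (-(w - v)) * exp (-v) := by rw [← exp_add]; ring_nf
  rw [key]
  nlinarith [one_sub_le_exp_neg (w - v), exp_pos (-v)]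

lemma one_div_sqrt_sub_one_div_sqrt_le {s t : ℝ} (hs : 0 < s) (hst : s ≤ t) (hts : t ≤ 2 * s) :
    1 / √s - 1 / √t ≤ (t - s) / t ^ (3 / 2 : ℝ) := by
  obtain ⟨a, ha, rfl⟩ : ∃ a, 0 < a ∧ s = a ^ 2 := ⟨√s, sqrt_pos.2 hs, (sq_sqrt hs.le).symm⟩
  obtain ⟨b, hb, rfl⟩ : ∃ b, 0 < b ∧ t = b ^ 2 :=
    ⟨√t, sqrt_pos.2 (hs.trans_le hst), (sq_sqrt (hs.le.trans hst)).symm⟩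
  have hab : a ≤ b := (pow_le_pow_iff_left₀ ha.le hb.le two_ne_zero).1 hst
  rw [rpow_three_halves (by positivity), sqrt_sq ha.le, sqrt_sq hb.le,
    div_sub_div _ _ ha.ne' hb.ne', div_le_div_iff₀ (by positivity) (by positivity)]
  -- after clearing denominators this is `(b - a) b (b² - ab - a²) ≤ 0`
  have hquad : b ^ 2 - a * b - a ^ 2 ≤ 0 := by nlinarith
  nlinarith [mul_nonneg (mul_nonneg (sub_nonneg.2 hab) hb.le) (neg_nonneg.2 hquad)]

lemma div_rpow_three_halves_le {c s t : ℝ} (hc : 0 ≤ c) (hs : 0 < s) (ht : 0 < t)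
    (hts : t ≤ 2 * s) :
    c / s ^ (3 / 2 : ℝ) ≤ 2 ^ (3 / 2 : ℝ) * (c / t ^ (3 / 2 : ℝ)) := by
  have hpow : t ^ (3 / 2 : ℝ) ≤ 2 ^ (3 / 2 : ℝ) * s ^ (3 / 2 : ℝ) := by
    rw [← mul_rpow zero_le_two hs.le]
    exact rpow_le_rpow ht.le hts (by norm_num)
  rw [mul_div_assoc', div_le_div_iff₀ (by positivity) (by positivity)]
  nlinarith [mul_le_mul_of_nonneg_left hpow hc]

lemma abs_heatKernel_sub_le {s t : ℝ} (hs : 0 < s) (hst : s ≤ t) (hts : t ≤ 2 * s) (z : ℝ) :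
    |heatKernel s z - heatKernel t z| ≤ 2 ^ (3 / 2 : ℝ) / exp 1 * ((t - s) / t ^ (3 / 2 : ℝ)) := by
  have ht : 0 < t := hs.trans_le hst
  set C := 2 ^ (3 / 2 : ℝ) / exp 1 * ((t - s) / t ^ (3 / 2 : ℝ))
  set v := z ^ 2 / (2 * t)
  set w := z ^ 2 / (2 * s)
  have hv : 0 ≤ v := by positivity
  have hvw : v ≤ w := div_le_div_of_nonneg_left (sq_nonneg z) (by positivity) (by linarith)
  have hwv : w - v = v * ((t - s) / s) := by simp only [v, w]; field_simp
  set P := (1 / √s - 1 / √t) * exp (-v)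
  set Q := 1 / √s * (exp (-v) - exp (-w))
  have hdecomp : heatKernel s z - heatKernel t z = P - Q := by
    simp only [heatKernel, P, Q, v, w, neg_div]; ring
  have hsqrt : 1 / √t ≤ 1 / √s := by gcongr
  have hP_nonneg : 0 ≤ P := mul_nonneg (sub_nonneg.2 hsqrt) (exp_pos _).le
  have hQ_nonneg : 0 ≤ Q := by
    have : exp (-w) ≤ exp (-v) := by gcongr
    exact mul_nonneg (by positivity) (sub_nonneg.2 this)
  have hP : P ≤ C := calc
    P ≤ 1 / √s - 1 / √t :=
      mul_le_of_le_one_right (sub_nonneg.2 hsqrt) (exp_le_one_iff.2 (neg_nonpos.2 hv))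
    _ ≤ (t - s) / t ^ (3 / 2 : ℝ) := one_div_sqrt_sub_one_div_sqrt_le hs hst hts
    _ ≤ C := le_mul_of_one_le_left (by positivity)
      ((one_le_div (exp_pos 1)).2 exp_one_le_two_rpow_three_halves)
  have hQ : Q ≤ C := calc
    Q ≤ 1 / √s * ((w - v) * exp (-v)) :=
      mul_le_mul_of_nonneg_left (exp_neg_sub_exp_neg_le v w) (by positivity)
    _ = v * exp (-v) * ((t - s) / s ^ (3 / 2 : ℝ)) := by
      rw [hwv, rpow_three_halves hs.le]; field_simp
    _ ≤ exp (-1) * ((t - s) / s ^ (3 / 2 : ℝ)) := by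
      gcongr
      exact mul_exp_neg_le_exp_neg_one v
    _ ≤ exp (-1) * (2 ^ (3 / 2 : ℝ) * ((t - s) / t ^ (3 / 2 : ℝ))) := by
      gcongr
      exact div_rpow_three_halves_le (sub_nonneg.2 hst) hs ht hts
    _ = C := by rw [exp_neg]; ring
  rw [hdecomp, abs_le]
  constructor <;> linarith

theorem heat_kernel_time_continuity_general (n k : ℕ) (hk : 1 ≤ k)
    (hkn : (k : ℝ) ≤ n / 2) (z : ℝ) :
    |(1 / Real.sqrt (n - k : ℝ)) * Real.exp (-z^2 / (2 * ((n : ℝ) - k)))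
        - (1 / Real.sqrt n) * Real.exp (-z^2 / (2 * n))|
      ≤ (2 : ℝ) ^ ((3 : ℝ)/2) / Real.exp 1 * (k / (n : ℝ) ^ ((3 : ℝ)/2)) := by
  have hk1 : (1 : ℝ) ≤ k := by exact_mod_cast hk
  have h := abs_heatKernel_sub_le (s := n - k) (t := n) (by linarith) (by linarith)
    (by linarith) z
  rwa [sub_sub_cancel] at h

/-- continuity of the Gaussian heat kernel in time:
`|(n-k)^{-1/2} e^{-z²/(2(n-k))} - n^{-1/2} e^{-z²/(2n)}| ≤ (2^{3/2}/e) k n^{-3/2}`. -/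
theorem heat_kernel_time_continuity (n k : ℕ) (hn : 2 ≤ n) (hk : 1 ≤ k)
    (hkn : (k : ℝ) ≤ n / 2) (z : ℝ) :
    |(1 / Real.sqrt (n - k : ℝ)) * Real.exp (-z^2 / (2 * ((n : ℝ) - k)))
        - (1 / Real.sqrt n) * Real.exp (-z^2 / (2 * n))|
      ≤ (2 : ℝ) ^ ((3 : ℝ)/2) / Real.exp 1 * (k / (n : ℝ) ^ ((3 : ℝ)/2)) :=
  heat_kernel_time_continuity_general n k hk hkn z
end
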